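/- Let m : ℝ → ℝ be differentiable at σ_∞² with 0 < m'(σ_∞²) and θ := κ⁻¹·m'(σ_∞²) < 1, and suppose the lossy SE recursion σ²_{t+1} = σ_W² + κ⁻¹·m(σ²_t + P·D_t) with D_t/(σ²_t − σ_∞²) → 0 produces σ²_t → σ_∞² with σ²_t > σ_∞² for all t, where σ_∞² = σ_W² + κ⁻¹·m(σ_∞²). Then the excess ε_t := σ²_t − σ_∞² satisfies lim_{t→∞} ε_{t+1}/ε_t = θ. -/

import Mathlib

/-!
Subtracting the fixed-point equation from the recursion gives
`ε_{t+1} = κ⁻¹ (m x_t - m σ_∞²)` with `x_t = σ²_t + P D_t`, and `x_t - σ_∞² = ε_t (1 + P D_t / ε_t)`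
is `ε_t (1 + o(1))`. The first-order expansion of `m` at `σ_∞²` therefore yields
`ε_{t+1} = κ⁻¹ m'(σ_∞²) ε_t (1 + o(1))`.
-/

open Filter

open Asymptotics Topology in
theorem HasDerivAt.tendsto_sub_div_of_tendsto_div {𝕜 ι : Type*} [NontriviallyNormedField 𝕜]
    {f : 𝕜 → 𝕜} {f' a c : 𝕜} {l : Filter ι} {u v : ι → 𝕜} (hf : HasDerivAt f f' a)
    (hu : Tendsto u l (𝓝 a)) (hv : ∀ᶠ t in l, v t ≠ 0)
    (huv : Tendsto (fun t => (u t - a) / v t) l (𝓝 c)) :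
    Tendsto (fun t => (f (u t) - f a) / v t) l (𝓝 (f' * c)) := by
  have hO : (fun t => u t - a) =O[l] v :=
    isBigO_of_div_tendsto_nhds (hv.mono fun t ht h => absurd h ht) c huv
  have hrem : (fun t => f (u t) - f a - (u t - a) • f') =o[l] v :=
    (hf.isLittleO.comp_tendsto hu).trans_isBigO hO
  have hlim := hrem.tendsto_div_nhds_zero.add (huv.const_mul f')
  rw [zero_add] at hlim
  refine hlim.congr fun t => ?_
  simp only [smul_eq_mul]
  ring

theorem excess_mse_geometric_decay_general
    (σW2 κ : ℝ) (P : ℕ)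
    (m : ℝ → ℝ) (σinf2 m' : ℝ)
    (hderiv : HasDerivAt m m' σinf2)
    (θ : ℝ) (hθ_def : θ = κ⁻¹ * m')
    (hfix : σinf2 = σW2 + κ⁻¹ * m σinf2)
    (D : ℕ → ℝ)
    (σ : ℕ → ℝ)
    (hrec : ∀ t, σ (t + 1) = σW2 + κ⁻¹ * m (σ t + (P : ℝ) * D t))
    (hD_rel : Tendsto (fun t => D t / (σ t - σinf2)) atTop (nhds 0))
    (hσ_lim : Tendsto σ atTop (nhds σinf2))
    (hσ_gt : ∀ t, σinf2 < σ t) :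
    Tendsto (fun t => (σ (t + 1) - σinf2) / (σ t - σinf2)) atTop (nhds θ) := by
  have hε_ne : ∀ t, σ t - σinf2 ≠ 0 := fun t => sub_ne_zero.2 (hσ_gt t).ne'
  have hε_lim : Tendsto (fun t => σ t - σinf2) atTop (nhds 0) := by
    simpa using hσ_lim.sub_const σinf2
  have hD_lim : Tendsto D atTop (nhds 0) := by
    simpa [div_mul_cancel₀ _ (hε_ne _)] using hD_rel.mul hε_lim
  have hx_lim : Tendsto (fun t => σ t + P * D t) atTop (nhds σinf2) := by
    simpa using hσ_lim.add (hD_lim.const_mul (P : ℝ))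
  have hx_rel : Tendsto (fun t => (σ t + P * D t - σinf2) / (σ t - σinf2)) atTop (nhds 1) := by
    have h := (hD_rel.const_mul (P : ℝ)).const_add 1
    rw [mul_zero, add_zero] at h
    refine h.congr fun t => ?_
    field_simp [hε_ne t]
    ring
  have hexcess : ∀ t, σ (t + 1) - σinf2 = κ⁻¹ * (m (σ t + P * D t) - m σinf2) := fun t => by
    rw [hrec t]
    nth_rewrite 1 [hfix]
    ring
  have hlim := (hderiv.tendsto_sub_div_of_tendsto_div hx_lim (.of_forall hε_ne) hx_rel).const_mul κ⁻¹
  rw [mul_one, ← hθ_def] at hlim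
  refine hlim.congr fun t => ?_
  rw [hexcess, mul_div_assoc]

/-- Geometric decay of the excess MSE: under the lossy state evolution recursion
with relatively negligible distortion, the excess `ε_t = σ²_t − σ_∞²` satisfies
`ε_{t+1}/ε_t → θ = κ⁻¹ * m'(σ_∞²)`. -/
theorem excess_mse_geometric_decay
    (σW2 κ : ℝ) (hσW : 0 ≤ σW2) (hκ : 0 < κ) (P : ℕ)
    (m : ℝ → ℝ) (σinf2 m' : ℝ)
    (hderiv : HasDerivAt m m' σinf2) (hm'_pos : 0 < m')
    (θ : ℝ) (hθ_def : θ = κ⁻¹ * m') (hθ_lt : θ < 1)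
    (hfix : σinf2 = σW2 + κ⁻¹ * m σinf2)
    (D : ℕ → ℝ) (hD_nonneg : ∀ t, 0 ≤ D t)
    (σ : ℕ → ℝ)
    (hrec : ∀ t, σ (t + 1) = σW2 + κ⁻¹ * m (σ t + (P : ℝ) * D t))
    (hD_rel : Tendsto (fun t => D t / (σ t - σinf2)) atTop (nhds 0))
    (hσ_lim : Tendsto σ atTop (nhds σinf2))
    (hσ_gt : ∀ t, σinf2 < σ t) :
    Tendsto (fun t => (σ (t + 1) - σinf2) / (σ t - σinf2)) atTop (nhds θ) :=
  excess_mse_geometric_decay_general σW2 κ P m σinf2 m' hderiv θ hθ_def hfix D σ hrec hD_rel hσ_lim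
    hσ_gt
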